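/- arXiv:2309.16607 — 2 statements merged into one kernel-verified Lean document; each statement's English description precedes it below -/
import Mathlib

section
/- Let n be a positive integer and let ν, η be partitions with |ν| < |η| = n. Then, as an identity of Laurent polynomials in ℤ[t, t⁻¹] (equivalently, for every nonzero rational number t): Σ_{μ : |μ| ≤ n} (−1)^{|μ|} t^{−μ·ν + Σ_{j≥1} C(μ_j,2)} ψ_{η/μ}(t) = 0, where the sum runs over all partitions μ (including the empty partition) of size at most n, ψ_{η/μ}(t) is interpreted as 0 when μ ⊄ η, and C(m,2) = m(m−1)/2. -/
open Matrix Module Polynomial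

attribute [local instance] Classical.propDecidable

/-- `μ` is a partition: its parts are weakly decreasing. -/
def IsPtn (μ : ℕ →₀ ℕ) : Prop := ∀ i, μ (i + 1) ≤ μ i

/-- The size `|μ|` of a partition. -/
def ptnSize (μ : ℕ →₀ ℕ) : ℕ := μ.sum fun _ v => v

/-- `W + ΔW + ⋯ + Δ^{j-1}W`. -/
noncomputable def iterSpan {F : Type} [Field F] {n : ℕ} (Δ : Matrix (Fin n) (Fin n) F)
    (W : Submodule F (Fin n → F)) (j : ℕ) : Submodule F (Fin n → F) :=
  ⨆ i ∈ Finset.range j, W.map (Δ ^ i).mulVecLin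

/-- `W` has `Δ`-profile `μ`. -/
def HasProfile {F : Type} [Field F] {n : ℕ} (Δ : Matrix (Fin n) (Fin n) F)
    (μ : ℕ →₀ ℕ) (W : Submodule F (Fin n → F)) : Prop :=
  ∀ j : ℕ, Module.finrank F (iterSpan Δ W (j + 1)) = ∑ i ∈ Finset.range (j + 1), μ i

/-- `σ(μ, Δ)`: the number of subspaces with `Δ`-profile `μ`. -/
noncomputable def sigmaProf {F : Type} [Field F] {n : ℕ} (μ : ℕ →₀ ℕ)
    (Δ : Matrix (Fin n) (Fin n) F) : ℕ :=
  Nat.card {W : Submodule F (Fin n → F) // HasProfile Δ μ W}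

/-- `X_α(Δ)`: the number of flags of `Δ`-invariant subspaces with successive
quotient dimensions given by `α`. -/
noncomputable def Xflag {F : Type} [Field F] {n ℓ : ℕ} (Δ : Matrix (Fin n) (Fin n) F)
    (α : Fin ℓ → ℕ) : ℕ :=
  Nat.card {W : Fin (ℓ + 1) → Submodule F (Fin n → F) //
    Monotone W ∧ W 0 = ⊥ ∧ W (Fin.last ℓ) = ⊤ ∧
    (∀ i, (W i).map Δ.mulVecLin ≤ W i) ∧
    ∀ i : Fin ℓ, Module.finrank F (W i.succ) = Module.finrank F (W i.castSucc) + α i}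

/-- The Gaussian binomial coefficient as a polynomial in `t`. -/
noncomputable def qbp : ℕ → ℕ → Polynomial ℤ
  | _, 0 => 1
  | 0, _ + 1 => 0
  | a + 1, b + 1 => qbp a b + Polynomial.X ^ (b + 1) * qbp a (b + 1)

/-- The `q`-integer `[m]_t`. -/
def qNat (t : ℚ) (m : ℕ) : ℚ := ∑ i ∈ Finset.range m, t ^ i

/-- The `q`-factorial `[m]_t!`. -/
def qFact (t : ℚ) (m : ℕ) : ℚ := ∏ i ∈ Finset.range m, qNat t (i + 1)


/-- `μ·ν = ∑_{j≥1} μ_j ν_j`. -/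
def dotP (μ ν : ℕ →₀ ℕ) : ℕ := μ.sum fun j a => a * ν j

/-- `∑_{j≥1} C(μ_j, 2)`. -/
def ch2 (μ : ℕ →₀ ℕ) : ℕ := μ.sum fun _ a => a.choose 2

/-- `ψ_{η/μ}(t) = ∏_{i≥1} [η_i - η_{i+1} choose η_i - μ_i]_t`, interpreted as `0`
when `μ ⊄ η`. -/
noncomputable def psiQ (t : ℚ) (η μ : ℕ →₀ ℕ) : ℚ :=
  if μ ≤ η then ∏ᶠ i : ℕ, Polynomial.aeval t (qbp (η i - η (i + 1)) (η i - μ i)) else 0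

/- ## Auxiliary lemmas -/

lemma qbp_zero_right (m : ℕ) : qbp m 0 = 1 := by cases m <;> rfl

lemma qbp_eq_zero : ∀ m k : ℕ, m < k → qbp m k = 0 := by
  intro m
  induction m with
  | zero => intro k hk; match k, hk with | k + 1, _ => rfl
  | succ m ih =>
    intro k hk
    match k, hk with
    | k + 1, hk =>
      show qbp (m+1) (k+1) = 0
      rw [qbp, ih k (by omega), ih (k+1) (by omega)]
      simp

lemma qbp_self : ∀ m : ℕ, qbp m m = 1 := by
  intro m
  induction m with
  | zero => rfl
  | succ m ih =>
    show qbp (m+1) (m+1) = 1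
    rw [qbp, ih, qbp_eq_zero m (m+1) (by omega)]
    simp

lemma choose2_succ (n : ℕ) : (n+1).choose 2 = n.choose 2 + n := by
  rw [Nat.choose_succ_succ]
  simp [Nat.choose_one_right]; omega

lemma choose2_add (v k : ℕ) : (v+k).choose 2 = v.choose 2 + k.choose 2 + v*k := by
  induction k with
  | zero => simp
  | succ k ih =>
    have : v + (k+1) = (v+k) + 1 := by omega
    rw [this, choose2_succ, ih, choose2_succ]
    ring

lemma choose2_cast (n : ℕ) : (n.choose 2 : ℤ) * 2 = n * (n - 1) := by
  induction n with
  | zero => simp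
  | succ n ih => rw [choose2_succ]; push_cast; push_cast at ih; ring_nf; ring_nf at ih; omega

/-- The `q`-binomial theorem for `qbp`. -/
lemma qbinom (t : ℚ) : ∀ (m : ℕ) (x : ℚ),
    ∑ k ∈ Finset.range (m+1), (-1:ℚ)^k * t^(k.choose 2) * x^k * (aeval t (qbp m k) : ℚ)
      = ∏ j ∈ Finset.range m, (1 - x * t^j) := by
  intro m
  induction m with
  | zero => intro x; simp [qbp_zero_right]
  | succ m ih =>
    intro x
    rw [Finset.sum_range_succ' (fun k => (-1:ℚ)^k * t^(k.choose 2) * x^k * (aeval t (qbp (m+1) k) : ℚ)) (m+1)]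
    have hrec : ∀ k : ℕ, (aeval t (qbp (m+1) (k+1)) : ℚ)
        = aeval t (qbp m k) + t^(k+1) * aeval t (qbp m (k+1)) := by
      intro k
      rw [qbp]
      simp [mul_comm]
    have hsplit : ∀ k ∈ Finset.range (m+1),
        (-1:ℚ)^(k+1) * t^((k+1).choose 2) * x^(k+1) * (aeval t (qbp (m+1) (k+1)) : ℚ)
        = -x * ((-1:ℚ)^k * t^(k.choose 2) * (x*t)^k * aeval t (qbp m k))
          + ((-1:ℚ)^(k+1) * t^((k+1).choose 2) * (x*t)^(k+1) * aeval t (qbp m (k+1))) := by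
      intro k _
      rw [hrec, choose2_succ, pow_add, pow_add, mul_pow, mul_pow]
      ring
    rw [Finset.sum_congr rfl hsplit, Finset.sum_add_distrib, ← Finset.mul_sum, ih (x*t)]
    have h2 : ∑ k ∈ Finset.range (m+1),
        ((-1:ℚ)^(k+1) * t^((k+1).choose 2) * (x*t)^(k+1) * aeval t (qbp m (k+1)))
        = ∑ k ∈ Finset.range (m+1), (-1:ℚ)^k * t^(k.choose 2) * (x*t)^k * aeval t (qbp m k) - 1 := by
      rw [Finset.sum_range_succ' (fun k => (-1:ℚ)^k * t^(k.choose 2) * (x*t)^k * aeval t (qbp m k)) m]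
      rw [Finset.sum_range_succ]
      rw [qbp_eq_zero m (m+1) (by omega)]
      simp [qbp_zero_right]
    rw [h2, ih (x*t)]
    rw [Finset.prod_range_succ' (fun j => 1 - x * t^j) m]
    simp only [qbp_zero_right, pow_zero, Nat.choose_zero_right, _root_.map_one]
    have : ∀ j ∈ Finset.range m, (1 - x*t*t^j) = (1 - x * t^(j+1)) := by
      intro j _; rw [pow_succ]; ring
    rw [Finset.prod_congr rfl this]
    have h0 : Nat.choose 0 2 = 0 := rfl
    rw [h0]
    ring

/-- The key vanishing of a one-row alternating sum. -/
lemma icc_sum_zero (t : ℚ) (ht : t ≠ 0) (a b ν₀ : ℕ) (h1 : a ≤ ν₀) (h2 : ν₀ < b) :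
    ∑ v ∈ Finset.Icc a b,
      ((-1:ℚ)^v * t^(-(v*ν₀ : ℤ) + ((v.choose 2 : ℤ))) * aeval t (qbp (b-a) (b-v))) = 0 := by
  set m := b - a with hm
  set x : ℚ := t ^ ((ν₀ : ℤ) - b + 1) with hx
  have key : ∑ v ∈ Finset.Icc a b,
      ((-1:ℚ)^v * t^(-(v*ν₀ : ℤ) + ((v.choose 2 : ℤ))) * aeval t (qbp (b-a) (b-v)))
      = ∑ k ∈ Finset.range (m+1),
        ((-1:ℚ)^b * t^(-(b*ν₀ : ℤ) + (b.choose 2 : ℤ))) *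
          ((-1:ℚ)^k * t^(k.choose 2) * x^k * (aeval t (qbp m k) : ℚ)) := by
    apply Finset.sum_nbij' (fun v => b - v) (fun k => b - k)
    · intro v hv; simp only [Finset.mem_Icc] at hv; simp only [Finset.mem_range]; omega
    · intro k hk; simp only [Finset.mem_range] at hk; simp only [Finset.mem_Icc]; omega
    · intro v hv; simp only [Finset.mem_Icc] at hv; omega
    · intro k hk; simp only [Finset.mem_range] at hk; omega
    · intro v hv
      simp only [Finset.mem_Icc] at hv
      set k := b - v with hkdef
      have hb : b = v + k := by omega
      have hsign : ((-1:ℚ)^b * (-1:ℚ)^k) = (-1:ℚ)^v := by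
        rw [← pow_add]
        have : b + k = v + 2*k := by omega
        rw [this, pow_add, pow_mul]
        norm_num
      have hexp : (-(v*ν₀ : ℤ) + ((v.choose 2 : ℤ)))
          = (-(b*ν₀ : ℤ) + (b.choose 2 : ℤ)) + (k.choose 2 : ℤ) + ((ν₀ : ℤ) - b + 1) * k := by
        have hc : ((b).choose 2 : ℤ) = (v.choose 2 : ℤ) + (k.choose 2 : ℤ) + (v:ℤ)*(k:ℤ) := by
          rw [hb, choose2_add]; push_cast; ring
        have hk2 := choose2_cast k
        have hbc : (b:ℤ) = (v:ℤ) + (k:ℤ) := by omega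
        rw [hc, hbc]
        ring_nf
        ring_nf at hk2
        nlinarith [hk2]
      have hpow : t^(-(v*ν₀ : ℤ) + ((v.choose 2 : ℤ)))
          = t^(-(b*ν₀ : ℤ) + (b.choose 2 : ℤ)) * t^(k.choose 2) * x^k := by
        rw [hexp, zpow_add₀ ht, zpow_add₀ ht, hx, ← zpow_natCast (t ^ ((ν₀ : ℤ) - b + 1)) k,
          ← _root_.zpow_mul, zpow_natCast t (k.choose 2)]
      rw [hpow, ← hsign]
      ring
  rw [key, ← Finset.mul_sum, qbinom t m x]
  have hmem : b - 1 - ν₀ ∈ Finset.range m := by simp only [Finset.mem_range]; omega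
  rw [Finset.prod_eq_zero hmem]
  · ring
  · have : x * t ^ (b - 1 - ν₀ : ℕ) = t ^ (((ν₀ : ℤ) - b + 1) + (b - 1 - ν₀ : ℕ)) := by
      rw [zpow_add₀ ht, zpow_natCast]
    rw [this]
    have h0 : ((ν₀ : ℤ) - b + 1) + ((b - 1 - ν₀ : ℕ) : ℤ) = 0 := by
      have : ((b - 1 - ν₀ : ℕ) : ℤ) = (b:ℤ) - 1 - ν₀ := by omega
      omega
    rw [h0, zpow_zero]
    ring

lemma size_mono (μ η : ℕ →₀ ℕ) (h : ∀ i, μ i ≤ η i) : ptnSize μ ≤ ptnSize η := by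
  have hsub : μ.support ⊆ μ.support ∪ η.support := Finset.subset_union_left
  have hsub' : η.support ⊆ μ.support ∪ η.support := Finset.subset_union_right
  rw [ptnSize, ptnSize,
    Finsupp.sum_of_support_subset μ hsub _ (fun _ _ => rfl),
    Finsupp.sum_of_support_subset η hsub' _ (fun _ _ => rfl)]
  exact Finset.sum_le_sum fun i _ => h i

theorem statement3 (n : ℕ) (hn : 0 < n) (η ν : ℕ →₀ ℕ) (hη : IsPtn η) (hν : IsPtn ν)
    (hsize : ptnSize η = n) (hνlt : ptnSize ν < n) (t : ℚ) (ht : t ≠ 0) :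
    (∑ᶠ μ ∈ {μ : ℕ →₀ ℕ | IsPtn μ ∧ ptnSize μ ≤ n},
        (-1 : ℚ) ^ ptnSize μ * t ^ (-(dotP μ ν : ℤ) + (ch2 μ : ℤ)) * psiQ t η μ) = 0 := by
  classical
  set f : (ℕ →₀ ℕ) → ℚ := fun μ =>
    (-1 : ℚ) ^ ptnSize μ * t ^ (-(dotP μ ν : ℤ) + (ch2 μ : ℤ)) * psiQ t η μ with hf
  -- existence of the special index i₀
  have hTex : ∃ i, ν i < η i := by
    by_contra hc
    push_neg at hc
    have := size_mono η ν hc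
    omega
  have hsupne : η.support.Nonempty := by
    obtain ⟨i, hi⟩ := hTex
    exact ⟨i, Finsupp.mem_support_iff.mpr (by omega)⟩
  set T : Finset ℕ := η.support.filter (fun i => ν i < η i) with hT
  have hTne : T.Nonempty := by
    obtain ⟨i, hi⟩ := hTex
    refine ⟨i, ?_⟩
    rw [hT, Finset.mem_filter]
    exact ⟨Finsupp.mem_support_iff.mpr (by omega), hi⟩
  set i₀ := T.max' hTne with hi₀
  have hi₀mem : i₀ ∈ T := T.max'_mem hTne
  have hνη : ν i₀ < η i₀ := by
    rw [hT] at hi₀mem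
    exact (Finset.mem_filter.mp hi₀mem).2
  have hnext : η (i₀ + 1) ≤ ν (i₀ + 1) := by
    by_contra hc
    push_neg at hc
    have hmem : i₀ + 1 ∈ T := by
      rw [hT, Finset.mem_filter]
      exact ⟨Finsupp.mem_support_iff.mpr (by omega), hc⟩
    have := T.le_max' _ hmem
    omega
  set a := η (i₀ + 1) with ha
  set b := η i₀ with hb
  have hab : a ≤ ν i₀ := le_trans hnext (hν i₀)
  have hab2 : ν i₀ < b := hνη
  -- bound N for supports
  set N := η.support.max' hsupne + i₀ + 2 with hN
  have hNzero : ∀ j, N ≤ j → η j = 0 := by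
    intro j hj
    by_contra hc
    have := η.support.le_max' j (Finsupp.mem_support_iff.mpr hc)
    omega
  have hi₀N : i₀ < N := by omega
  have hsupp_sub : η.support ⊆ Finset.range N := by
    intro j hj
    have := η.support.le_max' j hj
    simp only [Finset.mem_range]
    omega
  -- the lower bound partition α
  have hinj : Set.InjOn (· + 1) ((· + 1) ⁻¹' ↑η.support) := fun x _ y _ h => by simp only [] at h; omega
  set α : ℕ →₀ ℕ := Finsupp.comapDomain (· + 1) η hinj with hα
  have hαapp : ∀ i, α i = η (i + 1) := fun i => rfl
  -- expansions
  have hle_apply : ∀ {μ ρ : ℕ →₀ ℕ}, μ ≤ ρ → ∀ i, μ i ≤ ρ i := fun h i => h i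
  have hpsi : ∀ μ : ℕ →₀ ℕ, μ ≤ η →
      psiQ t η μ = ∏ j ∈ Finset.range N,
        (aeval t (qbp (η j - η (j+1)) (η j - μ j)) : ℚ) := by
    intro μ hμ
    rw [psiQ, if_pos hμ]
    apply finprod_eq_prod_of_mulSupport_subset
    intro j hj
    simp only [Function.mem_mulSupport] at hj
    by_contra hc
    simp only [Finset.coe_range, Set.mem_Iio, not_lt] at hc
    have h1 : η j = 0 := hNzero j hc
    have h2 : η (j+1) = 0 := hNzero (j+1) (by omega)
    have h3 : μ j = 0 := by
      have := hle_apply hμ j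
      omega
    apply hj
    rw [h1, h2, h3]
    simp [qbp_zero_right]
  have hsum : ∀ (g : ℕ → ℕ → ℕ), (∀ j, g j 0 = 0) → ∀ μ : ℕ →₀ ℕ, μ ≤ η →
      (μ.sum g) = ∑ j ∈ Finset.range N, g j (μ j) := by
    intro g hg μ hμ
    exact Finsupp.sum_of_support_subset μ
      (subset_trans (Finsupp.support_mono hμ) hsupp_sub) g (fun i _ => hg i)
  -- the one-variable factor and the rest
  set s' := (Finset.range N).erase i₀ with hs'
  set hfun : ℕ → ℚ := fun v =>
    (-1:ℚ)^v * t ^ (-(v * ν i₀ : ℤ) + ((v.choose 2 : ℤ))) *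
      (aeval t (qbp (b - a) (b - v)) : ℚ) with hhfun
  set G : (ℕ →₀ ℕ) → ℚ := fun μ =>
    (-1:ℚ) ^ (∑ j ∈ s', μ j) *
      t ^ (-((∑ j ∈ s', μ j * ν j : ℕ) : ℤ) + ((∑ j ∈ s', (μ j).choose 2 : ℕ) : ℤ)) *
      ∏ j ∈ s', (aeval t (qbp (η j - η (j+1)) (η j - μ j)) : ℚ) with hG
  have hi₀r : i₀ ∈ Finset.range N := Finset.mem_range.mpr hi₀N
  have f_eq : ∀ μ : ℕ →₀ ℕ, μ ≤ η → f μ = G μ * hfun (μ i₀) := by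
    intro μ hμ
    have e1 : ptnSize μ = μ i₀ + ∑ j ∈ s', μ j := by
      rw [ptnSize, hsum (fun _ v => v) (fun _ => rfl) μ hμ,
        ← Finset.add_sum_erase _ _ hi₀r]
    have e2 : dotP μ ν = μ i₀ * ν i₀ + ∑ j ∈ s', μ j * ν j := by
      rw [dotP, hsum (fun j a => a * ν j) (fun _ => by simp) μ hμ,
        ← Finset.add_sum_erase _ _ hi₀r]
    have e3 : ch2 μ = (μ i₀).choose 2 + ∑ j ∈ s', (μ j).choose 2 := by
      rw [ch2, hsum (fun _ a => a.choose 2) (fun _ => rfl) μ hμ,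
        ← Finset.add_sum_erase _ _ hi₀r]
    have e4 : psiQ t η μ = (aeval t (qbp (b - a) (b - μ i₀)) : ℚ) *
        ∏ j ∈ s', (aeval t (qbp (η j - η (j+1)) (η j - μ j)) : ℚ) := by
      rw [hpsi μ hμ, ← Finset.mul_prod_erase _ _ hi₀r]
    rw [hf]
    dsimp only
    rw [e1, e2, e3, e4, pow_add]
    have eexp : (-(((μ i₀ * ν i₀ + ∑ j ∈ s', μ j * ν j : ℕ)) : ℤ)
        + (((μ i₀).choose 2 + ∑ j ∈ s', (μ j).choose 2 : ℕ) : ℤ))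
        = (-((∑ j ∈ s', μ j * ν j : ℕ) : ℤ) + ((∑ j ∈ s', (μ j).choose 2 : ℕ) : ℤ))
          + (-((μ i₀ : ℤ) * (ν i₀ : ℤ)) + (((μ i₀).choose 2 : ℕ) : ℤ)) := by
      push_cast
      ring
    rw [eexp, zpow_add₀ ht]
    rw [hG, hhfun]
    dsimp only
    ring
  have G_update : ∀ (μ : ℕ →₀ ℕ) (v : ℕ), G (Finsupp.update μ i₀ v) = G μ := by
    intro μ v
    have hval : ∀ j ∈ s', (Finsupp.update μ i₀ v) j = μ j := by
      intro j hj
      have hne : j ≠ i₀ := (Finset.mem_erase.mp hj).1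
      rw [Finsupp.coe_update]
      exact Function.update_of_ne hne _ _
    rw [hG]
    dsimp only
    rw [Finset.sum_congr rfl (fun j hj => by rw [hval j hj]),
      Finset.sum_congr rfl (fun j hj => by rw [hval j hj] :
        ∀ j ∈ s', (Finsupp.update μ i₀ v) j * ν j = μ j * ν j),
      Finset.sum_congr rfl (fun j hj => by rw [hval j hj] :
        ∀ j ∈ s', ((Finsupp.update μ i₀ v) j).choose 2 = (μ j).choose 2),
      Finset.prod_congr rfl (fun j hj => by rw [hval j hj] :
        ∀ j ∈ s', (aeval t (qbp (η j - η (j+1)) (η j - (Finsupp.update μ i₀ v) j)) : ℚ)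
          = aeval t (qbp (η j - η (j+1)) (η j - μ j)))]
  -- support of f
  have f_ne : ∀ μ : ℕ →₀ ℕ, f μ ≠ 0 → α ≤ μ ∧ μ ≤ η := by
    intro μ hμ
    have hle : μ ≤ η := by
      by_contra hc
      apply hμ
      rw [hf]
      dsimp only
      rw [psiQ, if_neg hc]
      ring
    refine ⟨?_, hle⟩
    intro i
    by_contra hc
    push_neg at hc
    rw [hαapp] at hc
    apply hμ
    rw [hf]
    dsimp only
    have hpz : psiQ t η μ = 0 := by
      rw [hpsi μ hle]
      have hiN : i ∈ Finset.range N := by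
        simp only [Finset.mem_range]
        by_contra hiN
        push_neg at hiN
        have := hNzero (i+1) (by omega)
        omega
      apply Finset.prod_eq_zero hiN
      have hlt : η i - η (i+1) < η i - μ i := by
        have h2 : μ i ≤ η i := hle_apply hle i
        have h3 : η (i+1) ≤ η i := hη i
        omega
      rw [qbp_eq_zero _ _ hlt]
      simp
    rw [hpz]
    ring
  -- convert the finsum to a finite sum over Icc α η
  have hstep1 : (∑ᶠ μ ∈ {μ : ℕ →₀ ℕ | IsPtn μ ∧ ptnSize μ ≤ n}, f μ)
      = ∑ μ ∈ Finset.Icc α η, f μ := by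
    apply finsum_mem_eq_sum_of_subset
    · rintro μ ⟨-, h2⟩
      have h3 := f_ne μ h2
      simp only [Finset.coe_Icc, Set.mem_Icc]
      exact h3
    · intro μ hμ
      simp only [Finset.coe_Icc, Set.mem_Icc] at hμ
      constructor
      · intro i
        calc μ (i+1) ≤ η (i+1) := hle_apply hμ.2 (i+1)
          _ = α i := (hαapp i).symm
          _ ≤ μ i := hle_apply hμ.1 i
      · rw [← hsize]
        exact size_mono μ η (hle_apply hμ.2)
  rw [hstep1]
  -- the product decomposition
  set η' := Finsupp.update η i₀ a with hη'
  have hη'app : ∀ j, j ≠ i₀ → η' j = η j := by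
    intro j hj
    rw [hη', Finsupp.coe_update]
    exact Function.update_of_ne hj _ _
  have hη'i₀ : η' i₀ = a := by
    rw [hη', Finsupp.coe_update]
    exact Function.update_self _ _ _
  have hbij : ∑ μ ∈ Finset.Icc α η, f μ
      = ∑ p ∈ (Finset.Icc a b) ×ˢ (Finset.Icc α η'), f (Finsupp.update p.2 i₀ p.1) := by
    apply Finset.sum_nbij' (fun μ => (μ i₀, Finsupp.update μ i₀ a))
      (fun p => Finsupp.update p.2 i₀ p.1)
    · intro μ hμ
      simp only [Finset.mem_Icc] at hμ
      simp only [Finset.mem_product, Finset.mem_Icc]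
      refine ⟨⟨?_, ?_⟩, ?_, ?_⟩
      · have := hle_apply hμ.1 i₀; rw [hαapp] at this; exact this
      · exact hle_apply hμ.2 i₀
      · intro j
        by_cases hj : j = i₀
        · subst hj
          rw [Finsupp.coe_update, Function.update_self]
          exact le_of_eq (hαapp i₀)
        · rw [Finsupp.coe_update, Function.update_of_ne hj]
          exact hle_apply hμ.1 j
      · intro j
        by_cases hj : j = i₀
        · subst hj
          rw [Finsupp.coe_update, Function.update_self, hη'i₀]
        · rw [Finsupp.coe_update, Function.update_of_ne hj, hη'app j hj]
          exact hle_apply hμ.2 j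
    · rintro ⟨v, ρ⟩ hp
      simp only [Finset.mem_product, Finset.mem_Icc] at hp
      simp only [Finset.mem_Icc]
      constructor
      · intro j
        by_cases hj : j = i₀
        · subst hj
          rw [Finsupp.coe_update, Function.update_self]
          rw [hαapp]
          exact hp.1.1
        · rw [Finsupp.coe_update, Function.update_of_ne hj]
          exact hle_apply hp.2.1 j
      · intro j
        by_cases hj : j = i₀
        · subst hj
          rw [Finsupp.coe_update, Function.update_self]
          exact hp.1.2
        · rw [Finsupp.coe_update, Function.update_of_ne hj]
          calc ρ j ≤ η' j := hle_apply hp.2.2 j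
            _ = η j := hη'app j hj
    · intro μ hμ
      simp only [Finset.mem_Icc] at hμ
      ext j
      by_cases hj : j = i₀
      · subst hj
        rw [Finsupp.coe_update, Function.update_self]
      · rw [Finsupp.coe_update, Function.update_of_ne hj,
          Finsupp.coe_update, Function.update_of_ne hj]
    · rintro ⟨v, ρ⟩ hp
      simp only [Finset.mem_product, Finset.mem_Icc] at hp
      have hρi₀ : ρ i₀ = a := by
        have h1 := hle_apply hp.2.1 i₀
        rw [hαapp] at h1
        have h2 := hle_apply hp.2.2 i₀
        rw [hη'i₀] at h2
        omega
      have e1 : (Finsupp.update ρ i₀ v) i₀ = v := by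
        rw [Finsupp.coe_update, Function.update_self]
      have e2 : Finsupp.update (Finsupp.update ρ i₀ v) i₀ a = ρ := by
        ext j
        by_cases hj : j = i₀
        · subst hj
          rw [Finsupp.coe_update, Function.update_self, hρi₀]
        · rw [Finsupp.coe_update, Function.update_of_ne hj,
            Finsupp.coe_update, Function.update_of_ne hj]
      rw [e1, e2]
    · intro μ hμ
      simp only [Finset.mem_Icc] at hμ
      congr 1
      ext j
      by_cases hj : j = i₀
      · subst hj
        rw [Finsupp.coe_update, Function.update_self]
      · rw [Finsupp.coe_update, Function.update_of_ne hj,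
          Finsupp.coe_update, Function.update_of_ne hj]
  rw [hbij, Finset.sum_product]
  rw [Finset.sum_comm]
  apply Finset.sum_eq_zero
  intro ρ hρ
  simp only [Finset.mem_Icc] at hρ
  have hκ : ∀ v ∈ Finset.Icc a b, f (Finsupp.update ρ i₀ v) = G ρ * hfun v := by
    intro v hv
    rw [Finset.mem_Icc] at hv
    have hle : Finsupp.update ρ i₀ v ≤ η := by
      intro j
      by_cases hj : j = i₀
      · subst hj
        rw [Finsupp.coe_update, Function.update_self]
        exact hv.2
      · rw [Finsupp.coe_update, Function.update_of_ne hj]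
        calc ρ j ≤ η' j := hle_apply hρ.2 j
          _ = η j := hη'app j hj
    rw [f_eq _ hle, G_update]
    congr 1
    rw [Finsupp.coe_update, Function.update_self]
  rw [Finset.sum_congr rfl hκ, ← Finset.mul_sum]
  have hz : ∑ v ∈ Finset.Icc a b, hfun v = 0 := by
    rw [hhfun]
    exact icc_sum_zero t ht a b (ν i₀) hab hab2
  rw [hz, mul_zero]
end

section
/- Let n be a positive integer, q a prime power, Δ ∈ M_n(𝔽_q), and let ν be a partition with |ν| < n. Then, as an identity in ℚ: Σ_{μ : |μ| ≤ n} (−1)^{μ1} q^{−μ·ν + C(μ1,2)} σ(μ,Δ) = 0, where the sum is over all partitions μ (including the empty partition) of size at most n, μ·ν = Σ_{j≥1} μ_j ν_j, and C(m,2) = m(m−1)/2. -/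
open Matrix Module Polynomial

attribute [local instance] Classical.propDecidable

instance auxFiniteSubmodule {R M : Type} [Semiring R] [AddCommMonoid M] [Module R M]
    [Finite M] : Finite (Submodule R M) :=
  Finite.of_injective (fun p : Submodule R M => (p : Set M)) SetLike.coe_injective

noncomputable instance auxFintypeSubmodule {R M : Type} [Semiring R] [AddCommMonoid M]
    [Module R M] [Finite M] : Fintype (Submodule R M) := Fintype.ofFinite _

instance auxFiniteDual {R M : Type} [CommSemiring R] [AddCommMonoid M] [Module R M]
    [Finite M] [Finite R] : Finite (Module.Dual R M) :=
  Finite.of_injective (fun f : Module.Dual R M => (f : M → R)) DFunLike.coe_injective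

noncomputable instance auxFintypeDual {R M : Type} [CommSemiring R] [AddCommMonoid M]
    [Module R M] [Finite M] [Finite R] : Fintype (Module.Dual R M) := Fintype.ofFinite _

def wtq (F : Type) [Fintype F] (k : ℕ) : ℚ := (-1) ^ k * (Fintype.card F : ℚ) ^ k.choose 2

section Abstract
variable {F : Type} [Field F] [Fintype F] {V : Type} [AddCommGroup V] [Module F V]

lemma aux_card_eq [Finite V] (A : Submodule F V) :
    Nat.card ↥A = Fintype.card F ^ finrank F A := by
  haveI : Fintype ↥A := Fintype.ofFinite _
  rw [Nat.card_eq_fintype_card]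
  exact card_eq_pow_finrank

lemma aux_sum_ite_le [Finite V] (H : Submodule F V) (f : ℕ → ℚ) :
    ∑ W : Submodule F V, (if W ≤ H then f (finrank F ↥W) else 0)
      = ∑ U : Submodule F ↥H, f (finrank F ↥U) := by
  rw [← Finset.sum_filter]
  refine (Finset.sum_bij (fun (U : Submodule F ↥H) (_ : U ∈ Finset.univ) => U.map H.subtype)
    ?_ ?_ ?_ ?_).symm
  · intro U _
    exact Finset.mem_filter.mpr ⟨Finset.mem_univ _, Submodule.map_subtype_le H U⟩
  · intro U1 _ U2 _ h
    exact Submodule.map_injective_of_injective (Submodule.injective_subtype H) h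
  · intro W hW
    refine ⟨W.comap H.subtype, Finset.mem_univ _, ?_⟩
    show Submodule.map H.subtype (Submodule.comap H.subtype W) = W
    rw [Submodule.map_comap_subtype]
    exact inf_eq_right.mpr (Finset.mem_filter.mp hW).2
  · intro U _
    rw [Submodule.finrank_map_subtype_eq]

theorem aux_step (V : Type) [AddCommGroup V] [Module F V]
    [Finite V] [FiniteDimensional F V] {m : ℕ} (hm : finrank F V = m + 1) :
    ∃ H : Submodule F V, finrank F ↥H = m ∧
      ∑ W : Submodule F V, wtq F (finrank F ↥W)
        = (1 - (Fintype.card F : ℚ) ^ m) * ∑ U : Submodule F ↥H, wtq F (finrank F ↥U) := by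
  -- a nonzero functional
  have hnt : Nontrivial (Module.Dual F V) := by
    apply Module.nontrivial_of_finrank_pos (R := F)
    rw [Subspace.dual_finrank_eq, hm]; omega
  obtain ⟨ξ, hξ⟩ := exists_ne (0 : Module.Dual F V)
  obtain ⟨v, hv⟩ : ∃ v, ξ v ≠ 0 := by
    by_contra h; push_neg at h; exact hξ (by ext w; simp [h w])
  set e : V := (ξ v)⁻¹ • v with he
  have hξe : ξ e = 1 := by simp [he, inv_mul_cancel₀ hv]
  set H := LinearMap.ker ξ with hH
  have hHrk : finrank F ↥H = m := by
    have h := Module.Dual.finrank_ker_add_one_of_ne_zero hξ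
    rw [← hH] at h
    omega
  refine ⟨H, hHrk, ?_⟩
  have hSB : ∑ W ∈ Finset.univ.filter (fun W : Submodule F V => W ≤ H), wtq F (finrank F ↥W)
      = ∑ U : Submodule F ↥H, wtq F (finrank F ↥U) := by
    rw [Finset.sum_filter]; exact aux_sum_ite_le H (wtq F)
  -- rank of subspaces not inside H
  have hfr : ∀ W : Submodule F V, ¬ W ≤ H → finrank F ↥W = finrank F ↥(W ⊓ H) + 1 := by
    intro W hW
    have hsup : W ⊔ H = ⊤ := by
      by_contra hne
      have h2 : finrank F ↥(W ⊔ H) ≤ m + 1 := hm ▸ Submodule.finrank_le _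
      have h3 : finrank F ↥(W ⊔ H) ≠ m + 1 := by
        intro h
        exact hne (Submodule.eq_top_of_finrank_eq (by rw [h, hm]))
      have h5 : H = W ⊔ H :=
        Submodule.eq_of_le_of_finrank_le le_sup_right (by rw [hHrk]; omega)
      exact hW (h5 ▸ (le_sup_left : W ≤ W ⊔ H))
    have heq := Submodule.finrank_sup_add_finrank_inf_eq W H
    rw [hsup, finrank_top] at heq
    omega
  -- fiber cardinality
  have hcard : ∀ U : Submodule F V, U ≤ H →
      ((Finset.univ.filter (fun W : Submodule F V => ¬ W ≤ H)).filter
        (fun W => W ⊓ H = U)).card * Fintype.card F ^ (finrank F ↥U)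
      = Fintype.card F ^ m := by
    intro U hUH
    set T := {x : V // ξ x = 1} with hT
    haveI : Fintype T := Fintype.ofFinite _
    set θ : T → Submodule F V := fun x => U ⊔ Submodule.span F {x.1} with hθ
    have hxmem : ∀ x : T, x.1 ∈ θ x := fun x =>
      Submodule.mem_sup_right (Submodule.mem_span_singleton_self _)
    have hθnle : ∀ x : T, ¬ θ x ≤ H := by
      intro x hle
      have := hle (hxmem x)
      rw [hH, LinearMap.mem_ker, x.2] at this
      exact one_ne_zero this
    have hθinf : ∀ x : T, θ x ⊓ H = U := by
      intro x
      apply le_antisymm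
      · rintro y hy
        rw [Submodule.mem_inf] at hy
        obtain ⟨hy1, hy2⟩ := hy
        obtain ⟨u, hu, z, hz, rfl⟩ := Submodule.mem_sup.mp hy1
        obtain ⟨c, rfl⟩ := Submodule.mem_span_singleton.mp hz
        have hξu : ξ u = 0 := hUH hu
        have hc : c = 0 := by
          rw [hH, LinearMap.mem_ker, map_add, hξu, zero_add, _root_.map_smul, x.2,
            smul_eq_mul, mul_one] at hy2
          exact hy2
        simpa [hc] using hu
      · exact le_inf le_sup_left hUH
    have hθfr : ∀ x : T, finrank F ↥(θ x) = finrank F ↥U + 1 := by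
      intro x
      rw [hfr (θ x) (hθnle x), hθinf x]
    have hθeq : ∀ (x : T) (W : Submodule F V), ¬ W ≤ H → W ⊓ H = U → x.1 ∈ W → θ x = W := by
      intro x W hWle hWinf hxW
      have hle : θ x ≤ W := sup_le (hWinf ▸ inf_le_left : U ≤ W)
        ((Submodule.span_singleton_le_iff_mem _ _).mpr hxW)
      exact Submodule.eq_of_le_of_finrank_le hle
        (by rw [hθfr x, hfr W hWle, hWinf])
    -- card T = q ^ m
    have hcardT : Fintype.card T = Fintype.card F ^ m := by
      have eT : T ≃ ↥H :=
        { toFun := fun x => ⟨x.1 - e, by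
            rw [hH, LinearMap.mem_ker, map_sub, x.2, hξe, sub_self]⟩
          invFun := fun h => ⟨e + h.1, by
            have : ξ h.1 = 0 := h.2
            rw [map_add, hξe, this, add_zero]⟩
          left_inv := fun x => by ext; simp
          right_inv := fun h => by ext; simp }
      rw [← Nat.card_eq_fintype_card, Nat.card_congr eT, aux_card_eq, hHrk]
    -- fibers of θ
    have hfib : ∀ W ∈ (Finset.univ.filter (fun W : Submodule F V => ¬ W ≤ H)).filter
        (fun W => W ⊓ H = U),
        (Finset.univ.filter (fun x : T => θ x = W)).card = Fintype.card F ^ (finrank F ↥U) := by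
      intro W hW
      rw [Finset.mem_filter, Finset.mem_filter] at hW
      obtain ⟨⟨-, hWle⟩, hWinf⟩ := hW
      obtain ⟨w, hwW, hwH⟩ : ∃ w, w ∈ W ∧ w ∉ H := by
        by_contra h; push_neg at h; exact hWle h
      have hξw : ξ w ≠ 0 := by rwa [hH, LinearMap.mem_ker] at hwH
      set w₀ : V := (ξ w)⁻¹ • w with hw₀
      have hw₀W : w₀ ∈ W := Submodule.smul_mem _ _ hwW
      have hξw₀ : ξ w₀ = 1 := by simp [hw₀, inv_mul_cancel₀ hξw]
      have eFib : {x : T // θ x = W} ≃ ↥U :=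
        { toFun := fun x => ⟨x.1.1 - w₀, by
            have hxW : x.1.1 ∈ W := by have h := hxmem x.1; rwa [x.2] at h
            rw [← hWinf, Submodule.mem_inf]
            exact ⟨Submodule.sub_mem _ hxW hw₀W, by
              rw [hH, LinearMap.mem_ker, map_sub, x.1.2, hξw₀, sub_self]⟩⟩
          invFun := fun u => ⟨⟨w₀ + u.1, by
              have : ξ u.1 = 0 := hUH u.2
              rw [map_add, hξw₀, this, add_zero]⟩, by
            apply hθeq _ W hWle hWinf
            have huW : (u.1 : V) ∈ W := by
              have h2 : (u.1 : V) ∈ W ⊓ H := by rw [hWinf]; exact u.2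
              exact h2.1
            exact Submodule.add_mem _ hw₀W huW⟩
          left_inv := fun x => by ext; simp
          right_inv := fun u => by ext; simp }
      rw [← Fintype.card_subtype, ← Nat.card_eq_fintype_card, Nat.card_congr eFib,
        aux_card_eq]
    have hcount := Finset.card_eq_sum_card_fiberwise
      (f := θ) (s := Finset.univ)
      (t := (Finset.univ.filter (fun W : Submodule F V => ¬ W ≤ H)).filter
        (fun W => W ⊓ H = U))
      (fun x _ => by
        rw [Finset.mem_coe, Finset.mem_filter, Finset.mem_filter]
        exact ⟨⟨Finset.mem_univ _, hθnle x⟩, hθinf x⟩)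
    rw [Finset.card_univ, hcardT, Finset.sum_congr rfl hfib, Finset.sum_const,
      smul_eq_mul] at hcount
    exact hcount.symm
  -- put everything together
  rw [← Finset.sum_filter_add_sum_filter_not Finset.univ (fun W : Submodule F V => W ≤ H), hSB]
  have hmaps : ∀ W ∈ Finset.univ.filter (fun W : Submodule F V => ¬ W ≤ H),
      W ⊓ H ∈ Finset.univ.filter (fun U : Submodule F V => U ≤ H) :=
    fun W _ => Finset.mem_filter.mpr ⟨Finset.mem_univ _, inf_le_right⟩
  rw [← Finset.sum_fiberwise_of_maps_to hmaps (fun W => wtq F (finrank F ↥W))]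
  have hinner : ∀ U ∈ Finset.univ.filter (fun U : Submodule F V => U ≤ H),
      ∑ W ∈ (Finset.univ.filter (fun W : Submodule F V => ¬ W ≤ H)).filter
        (fun W => W ⊓ H = U), wtq F (finrank F ↥W)
      = -((Fintype.card F : ℚ) ^ m) * wtq F (finrank F ↥U) := by
    intro U hU
    have hUH : U ≤ H := (Finset.mem_filter.mp hU).2
    have hterm : ∀ W ∈ (Finset.univ.filter (fun W : Submodule F V => ¬ W ≤ H)).filter
        (fun W => W ⊓ H = U), wtq F (finrank F ↥W) = wtq F (finrank F ↥U + 1) := by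
      intro W hW
      rw [Finset.mem_filter, Finset.mem_filter] at hW
      obtain ⟨⟨-, hWle⟩, hWinf⟩ := hW
      rw [hfr W hWle, hWinf]
    rw [Finset.sum_congr rfl hterm, Finset.sum_const, nsmul_eq_mul]
    have hc := hcard U hUH
    have hcQ : (((Finset.univ.filter (fun W : Submodule F V => ¬ W ≤ H)).filter
        (fun W => W ⊓ H = U)).card : ℚ) * (Fintype.card F : ℚ) ^ (finrank F ↥U)
        = (Fintype.card F : ℚ) ^ m := by
      exact_mod_cast congrArg (Nat.cast : ℕ → ℚ) hc
    have hch : (finrank F ↥U + 1).choose 2 = (finrank F ↥U).choose 2 + finrank F ↥U := by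
      rw [Nat.choose_two_right, Nat.choose_two_right, Nat.triangle_succ]
    rw [wtq, wtq, hch, pow_succ, pow_add]
    linear_combination (-(-1:ℚ) ^ (finrank F ↥U) * (Fintype.card F : ℚ) ^ ((finrank F ↥U).choose 2)) * hcQ
  rw [Finset.sum_congr rfl hinner, ← Finset.mul_sum, Finset.sum_filter, aux_sum_ite_le H (wtq F)]
  ring
end Abstract

theorem aux_sum_wt (F : Type) [Field F] [Fintype F] :
    ∀ (m : ℕ) (V : Type) [AddCommGroup V] [Module F V] [Finite V] [FiniteDimensional F V],
      finrank F V = m + 1 → ∑ W : Submodule F V, wtq F (finrank F ↥W) = 0 := by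
  intro m
  induction m with
  | zero =>
    intro V _ _ _ _ hV
    obtain ⟨H, hH, hsum⟩ := aux_step V hV
    rw [hsum]; simp
  | succ m ih =>
    intro V _ _ _ _ hV
    obtain ⟨H, hH, hsum⟩ := aux_step V hV
    rw [hsum, ih ↥H (by rw [hH]), mul_zero]

lemma aux_finrank_map_add {F : Type} [Field F] {V : Type} [AddCommGroup V] [Module F V]
    [FiniteDimensional F V] {W : Type} [AddCommGroup W] [Module F W]
    (f : V →ₗ[F] W) (A : Submodule F V) :
    finrank F (A.map f) + finrank F ↥(A ⊓ LinearMap.ker f) = finrank F A := by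
  have h := LinearMap.finrank_range_add_finrank_ker (f.domRestrict A)
  rw [LinearMap.range_domRestrict, LinearMap.ker_domRestrict] at h
  have e : Submodule.comap A.subtype (LinearMap.ker f)
      = Submodule.comap A.subtype (A ⊓ LinearMap.ker f) := by
    ext x
    simp [Submodule.mem_comap, x.2]
  have e2 := (Submodule.comapSubtypeEquivOfLe
    (inf_le_left : A ⊓ LinearMap.ker f ≤ A)).finrank_eq
  rw [e, e2] at h
  exact h

lemma aux_codim_iInf {F V : Type} [Field F] [AddCommGroup V] [Module F V]
    [FiniteDimensional F V] {ι : Type} (s : Finset ι) (f : ι → Submodule F V) (w : ι → ℕ)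
    (hw : ∀ i ∈ s, finrank F V ≤ finrank F (f i) + w i) :
    finrank F V ≤ finrank F ↥(⨅ i ∈ s, f i) + ∑ i ∈ s, w i := by
  classical
  induction s using Finset.induction_on with
  | empty =>
    have he : (⨅ i ∈ (∅ : Finset ι), f i) = ⊤ := by simp
    rw [Finset.sum_empty, Nat.add_zero, he, finrank_top]
  | @insert a s ha ih =>
    rw [Finset.iInf_insert, Finset.sum_insert ha]
    have h1 := Submodule.finrank_sup_add_finrank_inf_eq (f a) (⨅ i ∈ s, f i)
    have h2 : finrank F ↥(f a ⊔ ⨅ i ∈ s, f i) ≤ finrank F V := Submodule.finrank_le _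
    have h3 := ih (fun i hi => hw i (Finset.mem_insert_of_mem hi))
    have h4 := hw a (Finset.mem_insert_self a s)
    omega

section ProfileTheory
variable {F : Type} [Field F] {n : ℕ} (Δ : Matrix (Fin n) (Fin n) F)

lemma iterSpan_zero (W : Submodule F (Fin n → F)) : iterSpan Δ W 0 = ⊥ := by
  simp [iterSpan]

lemma iterSpan_succ (W : Submodule F (Fin n → F)) (j : ℕ) :
    iterSpan Δ W (j + 1) = iterSpan Δ W j ⊔ W.map ((Δ ^ j).mulVecLin) := by
  rw [iterSpan, iterSpan, Finset.range_add_one, Finset.iSup_insert, sup_comm]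

lemma iterSpan_mono (W : Submodule F (Fin n → F)) : Monotone (iterSpan Δ W) := by
  intro j k h
  apply iSup₂_le
  intro i hi
  exact le_iSup₂_of_le i (Finset.mem_range.mpr (lt_of_lt_of_le (Finset.mem_range.mp hi) h))
    le_rfl

lemma iterSpan_one (W : Submodule F (Fin n → F)) : iterSpan Δ W 1 = W := by
  rw [iterSpan_succ, iterSpan_zero, bot_sup_eq, pow_zero, Matrix.mulVecLin_one,
    Submodule.map_id]

lemma map_iterSpan_le (W : Submodule F (Fin n → F)) (j : ℕ) :
    (iterSpan Δ W j).map Δ.mulVecLin ≤ iterSpan Δ W (j + 1) := by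
  rw [iterSpan, Submodule.map_iSup]
  apply iSup_le
  intro i
  rw [Submodule.map_iSup]
  apply iSup_le
  intro hi
  rw [← Submodule.map_comp, ← Matrix.mulVecLin_mul, ← pow_succ']
  exact le_iSup₂_of_le (i + 1)
    (Finset.mem_range.mpr (by have := Finset.mem_range.mp hi; omega)) le_rfl

lemma iterSpan_sup (W : Submodule F (Fin n → F)) (j : ℕ) :
    iterSpan Δ W (j + 2) = iterSpan Δ W (j + 1) ⊔ (iterSpan Δ W (j + 1)).map Δ.mulVecLin := by
  apply le_antisymm
  · rw [iterSpan_succ Δ W (j + 1)]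
    apply sup_le le_sup_left
    have h : W.map ((Δ ^ (j + 1)).mulVecLin) ≤ (iterSpan Δ W (j + 1)).map Δ.mulVecLin := by
      rw [pow_succ', Matrix.mulVecLin_mul, Submodule.map_comp]
      apply Submodule.map_mono
      have : W.map ((Δ ^ j).mulVecLin) ≤ iterSpan Δ W (j + 1) :=
        le_iSup₂_of_le j (Finset.mem_range.mpr (by omega)) le_rfl
      exact this
    exact h.trans le_sup_right
  · exact sup_le (iterSpan_mono Δ W (by omega)) (map_iterSpan_le Δ W (j + 1))

noncomputable def dseq (W : Submodule F (Fin n → F)) (j : ℕ) : ℕ :=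
  finrank F ↥(iterSpan Δ W j)

lemma dseq_zero (W : Submodule F (Fin n → F)) : dseq Δ W 0 = 0 := by
  rw [dseq, iterSpan_zero]
  exact finrank_bot F _

lemma dseq_one (W : Submodule F (Fin n → F)) : dseq Δ W 1 = finrank F ↥W := by
  rw [dseq, iterSpan_one]

lemma dseq_mono (W : Submodule F (Fin n → F)) (j : ℕ) : dseq Δ W j ≤ dseq Δ W (j + 1) :=
  Submodule.finrank_mono (iterSpan_mono Δ W (by omega))

lemma dseq_le (W : Submodule F (Fin n → F)) (j : ℕ) : dseq Δ W j ≤ n := by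
  have h := Submodule.finrank_le (iterSpan Δ W j)
  rwa [Module.finrank_fin_fun] at h

lemma dseq_dec (W : Submodule F (Fin n → F)) (j : ℕ) :
    dseq Δ W (j + 2) + dseq Δ W j ≤ dseq Δ W (j + 1) + dseq Δ W (j + 1) := by
  have h1 := Submodule.finrank_sup_add_finrank_inf_eq (iterSpan Δ W (j + 1))
    ((iterSpan Δ W (j + 1)).map Δ.mulVecLin)
  rw [← iterSpan_sup] at h1
  have h2 : (iterSpan Δ W j).map Δ.mulVecLin
      ≤ iterSpan Δ W (j + 1) ⊓ (iterSpan Δ W (j + 1)).map Δ.mulVecLin :=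
    le_inf (map_iterSpan_le Δ W j) (Submodule.map_mono (iterSpan_mono Δ W (by omega)))
  have h2' := Submodule.finrank_mono h2
  have h3 := aux_finrank_map_add Δ.mulVecLin (iterSpan Δ W (j + 1))
  have h4 := aux_finrank_map_add Δ.mulVecLin (iterSpan Δ W j)
  have h5 : finrank F ↥(iterSpan Δ W j ⊓ LinearMap.ker Δ.mulVecLin)
      ≤ finrank F ↥(iterSpan Δ W (j + 1) ⊓ LinearMap.ker Δ.mulVecLin) :=
    Submodule.finrank_mono (inf_le_inf_right _ (iterSpan_mono Δ W (by omega)))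
  simp only [dseq]
  omega

lemma dseq_inc_anti (W : Submodule F (Fin n → F)) :
    ∀ i j, i ≤ j → dseq Δ W (j + 1) - dseq Δ W j ≤ dseq Δ W (i + 1) - dseq Δ W i := by
  intro i j h
  induction j with
  | zero =>
    have : i = 0 := Nat.le_zero.mp h
    subst this; exact le_rfl
  | succ j ih =>
    rcases Nat.eq_or_lt_of_le h with rfl | hlt
    · exact le_rfl
    · have hij : i ≤ j := by omega
      have hd : dseq Δ W (j + 1 + 1) + dseq Δ W j ≤ dseq Δ W (j + 1) + dseq Δ W (j + 1) :=
        dseq_dec Δ W j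
      have hm1 := dseq_mono Δ W j
      have hm2 := dseq_mono Δ W (j + 1)
      have := ih hij
      omega

lemma dseq_lb (W : Submodule F (Fin n → F)) :
    ∀ i, dseq Δ W i < dseq Δ W (i + 1) → i + 1 ≤ dseq Δ W (i + 1) := by
  intro i
  induction i with
  | zero =>
    intro h
    have := dseq_zero Δ W
    omega
  | succ i ih =>
    intro h
    have ha := dseq_inc_anti Δ W i (i + 1) (by omega)
    have hm := dseq_mono Δ W i
    have hm2 := dseq_mono Δ W (i + 1)
    have h1 : dseq Δ W i < dseq Δ W (i + 1) := by omega
    have := ih h1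
    omega

noncomputable def profil (W : Submodule F (Fin n → F)) : ℕ →₀ ℕ :=
  Finsupp.onFinset (Finset.range n) (fun i => dseq Δ W (i + 1) - dseq Δ W i) (by
    intro i hne
    have hne' : dseq Δ W (i + 1) - dseq Δ W i ≠ 0 := hne
    rw [Finset.mem_range]
    by_contra hge
    push_neg at hge
    have hm := dseq_mono Δ W i
    have hlt : dseq Δ W i < dseq Δ W (i + 1) := by omega
    have h1 := dseq_lb Δ W i hlt
    have h2 := dseq_le Δ W (i + 1)
    omega)

lemma profil_apply (W : Submodule F (Fin n → F)) (i : ℕ) :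
    profil Δ W i = dseq Δ W (i + 1) - dseq Δ W i := rfl

lemma isPtn_profil (W : Submodule F (Fin n → F)) : IsPtn (profil Δ W) := by
  intro i
  rw [profil_apply, profil_apply]
  exact dseq_inc_anti Δ W i (i + 1) (by omega)

lemma dseq_sum (W : Submodule F (Fin n → F)) :
    ∀ j, dseq Δ W j = ∑ i ∈ Finset.range j, profil Δ W i := by
  intro j
  induction j with
  | zero => simp [dseq_zero]
  | succ j ih =>
    rw [Finset.sum_range_succ, ← ih, profil_apply]
    have := dseq_mono Δ W j
    omega

lemma hasProfile_profil (W : Submodule F (Fin n → F)) : HasProfile Δ (profil Δ W) W :=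
  fun j => dseq_sum Δ W (j + 1)

lemma support_profil (W : Submodule F (Fin n → F)) :
    (profil Δ W).support ⊆ Finset.range n := Finsupp.support_onFinset_subset

lemma ptnSize_profil (W : Submodule F (Fin n → F)) : ptnSize (profil Δ W) ≤ n := by
  rw [ptnSize, Finsupp.sum_of_support_subset _ (support_profil Δ W) _ (fun i _ => rfl)]
  rw [← dseq_sum]
  exact dseq_le Δ W n

lemma profil_zero (W : Submodule F (Fin n → F)) : profil Δ W 0 = finrank F ↥W := by
  have h0 := dseq_zero Δ W
  have h1 : dseq Δ W (0 + 1) = finrank F ↥W := dseq_one Δ W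
  rw [profil_apply]
  omega

lemma hasProfile_iff (μ : ℕ →₀ ℕ) (W : Submodule F (Fin n → F)) :
    HasProfile Δ μ W ↔ μ = profil Δ W := by
  constructor
  · intro h
    have h' : ∀ j, dseq Δ W (j + 1) = ∑ i ∈ Finset.range (j + 1), μ i := h
    ext i
    cases i with
    | zero =>
      have h0 := h' 0
      rw [Finset.sum_range_one] at h0
      have hz := dseq_zero Δ W
      rw [profil_apply]
      omega
    | succ i =>
      have ha := h' i
      have hb := h' (i + 1)
      rw [Finset.sum_range_succ, ← ha] at hb
      rw [profil_apply]
      omega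
  · rintro rfl
    exact hasProfile_profil Δ W

end ProfileTheory


/-! ### Counting lemmas -/

section Counting
variable {F : Type} [Field F] [Fintype F]

lemma aux_card_module (V : Type) [AddCommGroup V] [Module F V] [Finite V] :
    Nat.card V = Fintype.card F ^ finrank F V := by
  haveI : Fintype V := Fintype.ofFinite _
  rw [Nat.card_eq_fintype_card]
  exact card_eq_pow_finrank

lemma aux_ker_bound {n : ℕ} (ψ : Module.Dual F (Fin n → F)) :
    n ≤ finrank F ↥(LinearMap.ker ψ) + 1 := by
  have h := LinearMap.finrank_range_add_finrank_ker ψ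
  rw [Module.finrank_fin_fun] at h
  have h2 : finrank F ↥(LinearMap.range ψ) ≤ 1 := by
    have h3 := Submodule.finrank_le (LinearMap.range ψ)
    rwa [Module.finrank_self] at h3
  omega

lemma aux_card_ann {n : ℕ} (A : Submodule F (Fin n → F)) :
    ∑ φ : Module.Dual F (Fin n → F), (if A ≤ LinearMap.ker φ then (1:ℚ) else 0)
      = (Fintype.card F : ℚ) ^ ((n : ℤ) - (finrank F ↥A : ℤ)) := by
  rw [Finset.sum_boole]
  have h1 : (Finset.univ.filter (fun φ : Module.Dual F (Fin n → F) => A ≤ LinearMap.ker φ)).card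
      = Nat.card ↥(A.dualAnnihilator) := by
    rw [← Fintype.card_subtype, ← Nat.card_eq_fintype_card]
    apply Nat.card_congr
    apply Equiv.subtypeEquivRight
    intro φ
    rw [Submodule.mem_dualAnnihilator]
    constructor
    · intro h w hw
      exact LinearMap.mem_ker.mp (h hw)
    · intro h x hx
      exact LinearMap.mem_ker.mpr (h x hx)
  have h2 : Nat.card ↥(A.dualAnnihilator) = Nat.card ((Fin n → F) ⧸ A) :=
    (Nat.card_congr (Subspace.quotEquivAnnihilator A).toEquiv).symm
  have h3 : Nat.card ((Fin n → F) ⧸ A) = Fintype.card F ^ finrank F ((Fin n → F) ⧸ A) :=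
    aux_card_module _
  have h4 := Submodule.finrank_quotient_add_finrank A
  rw [Module.finrank_fin_fun] at h4
  have h5 : (n : ℤ) - (finrank F ↥A : ℤ) = (finrank F ((Fin n → F) ⧸ A) : ℤ) := by omega
  rw [h1, h2, h3, h5, zpow_natCast, Nat.cast_pow]

lemma iterSpan_le_ker {n : ℕ} (Δ : Matrix (Fin n) (Fin n) F) (W : Submodule F (Fin n → F))
    (t : ℕ) (φ : Module.Dual F (Fin n → F)) :
    iterSpan Δ W t ≤ LinearMap.ker φ
      ↔ W ≤ ⨅ i ∈ Finset.range t, LinearMap.ker (φ ∘ₗ (Δ ^ i).mulVecLin) := by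
  rw [iterSpan]
  simp only [iSup₂_le_iff, le_iInf₂_iff]
  refine forall₂_congr fun i hi => ?_
  rw [Submodule.map_le_iff_le_comap, LinearMap.ker_comp]

end Counting

/-! ### Partition lemmas -/

lemma IsPtn.anti {μ : ℕ →₀ ℕ} (h : IsPtn μ) : ∀ {i j : ℕ}, i ≤ j → μ j ≤ μ i := by
  intro i j hij
  induction j with
  | zero =>
    have : i = 0 := Nat.le_zero.mp hij
    subst this; exact le_rfl
  | succ j ih =>
    rcases Nat.eq_or_lt_of_le hij with rfl | hlt
    · exact le_rfl
    · exact le_trans (h j) (ih (by omega))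

lemma sum_range_le_size (μ : ℕ →₀ ℕ) (N : ℕ) : ∑ i ∈ Finset.range N, μ i ≤ ptnSize μ := by
  rw [ptnSize, Finsupp.sum_of_support_subset _
    (Finset.subset_union_left : μ.support ⊆ μ.support ∪ Finset.range N) _ (fun i _ => rfl)]
  exact Finset.sum_le_sum_of_subset Finset.subset_union_right

lemma IsPtn.eq_zero {μ : ℕ →₀ ℕ} (h : IsPtn μ) {i : ℕ} (hi : ptnSize μ ≤ i) : μ i = 0 := by
  by_contra hne
  have h1 : ∀ t ∈ Finset.range (i + 1), 1 ≤ μ t := by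
    intro t ht
    have h1i : 1 ≤ μ i := by omega
    exact le_trans h1i (h.anti (by have := Finset.mem_range.mp ht; omega))
  have h2 : i + 1 ≤ ∑ t ∈ Finset.range (i + 1), μ t := by
    calc i + 1 = ∑ _t ∈ Finset.range (i + 1), 1 := by simp
    _ ≤ _ := Finset.sum_le_sum h1
  have h3 := sum_range_le_size μ (i + 1)
  omega

lemma part_le_size (μ : ℕ →₀ ℕ) (i : ℕ) : μ i ≤ ptnSize μ := by
  have h1 : μ i ≤ ∑ t ∈ Finset.range (i + 1), μ t :=
    Finset.single_le_sum (fun t _ => Nat.zero_le _) (Finset.mem_range.mpr (by omega))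
  exact le_trans h1 (sum_range_le_size μ (i + 1))

lemma ptnSet_finite (n : ℕ) : {μ : ℕ →₀ ℕ | IsPtn μ ∧ ptnSize μ ≤ n}.Finite := by
  apply Set.Finite.of_finite_image
    (f := fun (μ : ℕ →₀ ℕ) => fun i : Fin n => (⟨min (μ i) n, by omega⟩ : Fin (n + 1)))
  · exact Set.toFinite _
  · intro μ1 h1 μ2 h2 heq
    obtain ⟨hp1, hs1⟩ := h1
    obtain ⟨hp2, hs2⟩ := h2
    ext i
    by_cases hi : i < n
    · have he := congrArg Fin.val (congrFun heq ⟨i, hi⟩)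
      simp only at he
      have e1 : min (μ1 i) n = μ1 i := min_eq_left (le_trans (part_le_size μ1 i) hs1)
      have e2 : min (μ2 i) n = μ2 i := min_eq_left (le_trans (part_le_size μ2 i) hs2)
      rw [e1, e2] at he
      exact he
    · rw [hp1.eq_zero (by omega), hp2.eq_zero (by omega)]

lemma support_subset_range {μ : ℕ →₀ ℕ} (h : IsPtn μ) {N : ℕ} (hN : ptnSize μ ≤ N) :
    μ.support ⊆ Finset.range N := by
  intro i hi
  rw [Finset.mem_range]
  by_contra hge
  exact (Finsupp.mem_support_iff.mp hi) (h.eq_zero (by omega))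

lemma aux_zpow_prod {a : ℚ} (ha : a ≠ 0) {ι : Type} (s : Finset ι) (f : ι → ℤ) :
    ∏ i ∈ s, a ^ f i = a ^ (∑ i ∈ s, f i) := by
  classical
  induction s using Finset.induction_on with
  | empty => simp
  | @insert b s hb ih => rw [Finset.prod_insert hb, Finset.sum_insert hb, ih, zpow_add₀ ha]

lemma tele_shift (h : ℕ → ℤ) (n : ℕ) :
    ∑ j ∈ Finset.range n, h (j + 1) = ∑ j ∈ Finset.range n, h j + h n - h 0 := by
  have h1 := Finset.sum_range_succ' h n
  have h2 := Finset.sum_range_succ h n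
  linarith [h1, h2]

lemma ptn_tele1 {n : ℕ} (ν : ℕ →₀ ℕ) (hν : IsPtn ν) (hνlt : ptnSize ν < n) :
    ∑ j ∈ Finset.range n, (ν j - ν (j + 1)) * (j + 1) = ptnSize ν := by
  have hν0 : ∀ i, n ≤ i → ν i = 0 := fun i hi => hν.eq_zero (by omega)
  have hsize : ptnSize ν = ∑ j ∈ Finset.range n, ν j := by
    rw [ptnSize, Finsupp.sum_of_support_subset _
      (support_subset_range (N := n) hν (Nat.le_of_lt hνlt)) _ (fun i _ => rfl)]
  have cast1 : ((∑ j ∈ Finset.range n, (ν j - ν (j + 1)) * (j + 1) : ℕ) : ℤ)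
      = ∑ j ∈ Finset.range n, ((ν j : ℤ) - ν (j + 1)) * (j + 1) := by
    rw [Nat.cast_sum]
    apply Finset.sum_congr rfl
    intro j _
    rw [Nat.cast_mul, Nat.cast_sub (hν j)]
    push_cast
    ring
  have e1 : ∑ j ∈ Finset.range n, ((ν j : ℤ) - ν (j + 1)) * (j + 1)
      = ∑ j ∈ Finset.range n, (ν j : ℤ) * (j + 1)
        - ∑ j ∈ Finset.range n, (ν (j + 1) : ℤ) * (j + 1) := by
    rw [← Finset.sum_sub_distrib]
    exact Finset.sum_congr rfl fun j _ => by ring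
  have e2 : ∑ j ∈ Finset.range n, (ν (j + 1) : ℤ) * (j + 1)
      = ∑ j ∈ Finset.range n, (ν j : ℤ) * j := by
    have := tele_shift (fun j => (ν j : ℤ) * j) n
    simp only [hν0 n le_rfl] at this
    push_cast at this
    simpa using this
  have final : ((∑ j ∈ Finset.range n, (ν j - ν (j + 1)) * (j + 1) : ℕ) : ℤ)
      = (ptnSize ν : ℤ) := by
    rw [cast1, e1, e2, hsize]
    push_cast
    rw [← Finset.sum_sub_distrib]
    exact Finset.sum_congr rfl fun j _ => by ring
  exact_mod_cast final

lemma dot_tele {F : Type} [Field F] {n : ℕ} (Δ : Matrix (Fin n) (Fin n) F)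
    (W : Submodule F (Fin n → F)) (ν : ℕ →₀ ℕ) (hν : IsPtn ν) (hν0 : ν n = 0) :
    ∑ j ∈ Finset.range n, ((ν j : ℤ) - ν (j + 1)) * (dseq Δ W (j + 1) : ℤ)
      = (dotP (profil Δ W) ν : ℤ) := by
  have hdot : dotP (profil Δ W) ν = ∑ i ∈ Finset.range n, profil Δ W i * ν i := by
    rw [dotP, Finsupp.sum_of_support_subset _ (support_profil Δ W) _
      (fun i _ => by rw [zero_mul])]
  have e1 : ∑ j ∈ Finset.range n, ((ν j : ℤ) - ν (j + 1)) * (dseq Δ W (j + 1) : ℤ)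
      = ∑ j ∈ Finset.range n, (ν j : ℤ) * dseq Δ W (j + 1)
        - ∑ j ∈ Finset.range n, (ν (j + 1) : ℤ) * dseq Δ W (j + 1) := by
    rw [← Finset.sum_sub_distrib]
    exact Finset.sum_congr rfl fun j _ => by ring
  have e2 : ∑ j ∈ Finset.range n, (ν (j + 1) : ℤ) * dseq Δ W (j + 1)
      = ∑ j ∈ Finset.range n, (ν j : ℤ) * dseq Δ W j := by
    have := tele_shift (fun j => (ν j : ℤ) * dseq Δ W j) n
    simp only [hν0, dseq_zero] at this
    simpa using this
  rw [e1, e2, hdot]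
  push_cast
  rw [← Finset.sum_sub_distrib]
  apply Finset.sum_congr rfl
  intro j _
  have hmono := dseq_mono Δ W j
  have hp : (profil Δ W j : ℤ) = (dseq Δ W (j + 1) : ℤ) - dseq Δ W j := by
    rw [profil_apply]
    push_cast [Nat.cast_sub hmono]
    ring
  rw [hp]
  ring

/-! ### The master identity -/

theorem master {F : Type} [Field F] [Fintype F] {n : ℕ} (Δ : Matrix (Fin n) (Fin n) F)
    (ν : ℕ →₀ ℕ) (hν : IsPtn ν) (hνlt : ptnSize ν < n) :
    ∑ W : Submodule F (Fin n → F), wtq F (finrank F ↥W) *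
      ∏ j ∈ Finset.range n, (∑ φ : Module.Dual F (Fin n → F),
        if iterSpan Δ W (j + 1) ≤ LinearMap.ker φ then (1:ℚ) else 0) ^ (ν j - ν (j + 1)) = 0 := by
  classical
  have hν0 : ∀ i, n ≤ i → ν i = 0 := fun i hi => hν.eq_zero (by omega)
  have hV : finrank F (Fin n → F) = n := Module.finrank_fin_fun F
  have hsig : ∀ (X : ℕ → ℚ), ∏ j ∈ Finset.range n, X j ^ (ν j - ν (j + 1))
      = ∏ p : (Σ j : Fin n, Fin (ν j.1 - ν (j.1 + 1))), X p.1.1 := by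
    intro X
    rw [← Fin.prod_univ_eq_prod_range (fun j => X j ^ (ν j - ν (j + 1))) n,
      ← Finset.univ_sigma_univ, Finset.prod_sigma]
    apply Finset.prod_congr rfl
    intro j _
    dsimp only
    rw [Finset.prod_const, Finset.card_univ, Fintype.card_fin]
  have step1 : ∀ W : Submodule F (Fin n → F),
      wtq F (finrank F ↥W) * ∏ j ∈ Finset.range n, (∑ φ : Module.Dual F (Fin n → F),
        if iterSpan Δ W (j + 1) ≤ LinearMap.ker φ then (1:ℚ) else 0) ^ (ν j - ν (j + 1))
      = ∑ g : (Σ j : Fin n, Fin (ν j.1 - ν (j.1 + 1))) → Module.Dual F (Fin n → F),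
          wtq F (finrank F ↥W) *
            ∏ p : (Σ j : Fin n, Fin (ν j.1 - ν (j.1 + 1))),
              (if iterSpan Δ W (p.1.1 + 1) ≤ LinearMap.ker (g p) then (1:ℚ) else 0) := by
    intro W
    rw [hsig (fun j => ∑ φ : Module.Dual F (Fin n → F),
      if iterSpan Δ W (j + 1) ≤ LinearMap.ker φ then (1:ℚ) else 0),
      Finset.prod_univ_sum, Fintype.piFinset_univ, Finset.mul_sum]
  rw [Finset.sum_congr rfl (fun W _ => step1 W), Finset.sum_comm]
  apply Finset.sum_eq_zero
  intro g _
  set K : Submodule F (Fin n → F) := ⨅ p ∈ (Finset.univ : Finset (Σ j : Fin n, Fin (ν j.1 - ν (j.1 + 1)))),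
    ⨅ i ∈ Finset.range (p.1.1 + 1), LinearMap.ker ((g p) ∘ₗ (Δ ^ i).mulVecLin) with hK
  have hcond : ∀ W : Submodule F (Fin n → F),
      (∏ p : (Σ j : Fin n, Fin (ν j.1 - ν (j.1 + 1))),
        (if iterSpan Δ W (p.1.1 + 1) ≤ LinearMap.ker (g p) then (1:ℚ) else 0))
      = if W ≤ K then 1 else 0 := by
    intro W
    rw [Finset.prod_boole]
    have hiff : (∀ p : (Σ j : Fin n, Fin (ν j.1 - ν (j.1 + 1))), p ∈ Finset.univ →
        iterSpan Δ W (p.1.1 + 1) ≤ LinearMap.ker (g p)) ↔ W ≤ K := by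
      rw [hK, le_iInf₂_iff]
      exact forall₂_congr fun p _ => iterSpan_le_ker Δ W (p.1.1 + 1) (g p)
    simp only [hiff]
  have hstep : ∑ W : Submodule F (Fin n → F), wtq F (finrank F ↥W) *
      ∏ p : (Σ j : Fin n, Fin (ν j.1 - ν (j.1 + 1))),
        (if iterSpan Δ W (p.1.1 + 1) ≤ LinearMap.ker (g p) then (1:ℚ) else 0)
      = ∑ W : Submodule F (Fin n → F), (if W ≤ K then wtq F (finrank F ↥W) else 0) := by
    apply Finset.sum_congr rfl
    intro W _
    rw [hcond W, mul_ite, mul_one, mul_zero]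
  rw [hstep, aux_sum_ite_le K (wtq F)]
  -- K has positive dimension
  have hin : ∀ (φ : Module.Dual F (Fin n → F)) (t : ℕ),
      finrank F (Fin n → F) ≤ finrank F
        ↥(⨅ i ∈ Finset.range t, LinearMap.ker (φ ∘ₗ (Δ ^ i).mulVecLin)) + t := by
    intro φ t
    have h := aux_codim_iInf (Finset.range t)
      (fun i => LinearMap.ker (φ ∘ₗ (Δ ^ i).mulVecLin)) (fun _ => 1)
      (fun i _ => by rw [hV]; exact aux_ker_bound _)
    rw [Finset.sum_const, Finset.card_range, smul_eq_mul, mul_one] at h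
    exact h
  have hbig := aux_codim_iInf (Finset.univ : Finset (Σ j : Fin n, Fin (ν j.1 - ν (j.1 + 1))))
    (fun p => ⨅ i ∈ Finset.range (p.1.1 + 1), LinearMap.ker ((g p) ∘ₗ (Δ ^ i).mulVecLin))
    (fun p => p.1.1 + 1) (fun p _ => hin (g p) (p.1.1 + 1))
  have hsum : ∑ p : (Σ j : Fin n, Fin (ν j.1 - ν (j.1 + 1))), (p.1.1 + 1) = ptnSize ν := by
    rw [← Finset.univ_sigma_univ, Finset.sum_sigma]
    dsimp only
    have e : ∀ j : Fin n, ∑ _k : Fin (ν j.1 - ν (j.1 + 1)), (j.1 + 1)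
        = (ν j.1 - ν (j.1 + 1)) * (j.1 + 1) := by
      intro j
      rw [Finset.sum_const, Finset.card_univ, Fintype.card_fin, smul_eq_mul]
    rw [Finset.sum_congr rfl (fun j _ => e j)]
    rw [Fin.sum_univ_eq_sum_range (fun j => (ν j - ν (j + 1)) * (j + 1)) n]
    exact ptn_tele1 ν hν hνlt
  have hbig' : n ≤ finrank F ↥K + ptnSize ν := by
    rw [hV, hsum] at hbig
    exact hbig
  have hrank : 1 ≤ finrank F ↥K := by omega
  obtain ⟨m, hm⟩ : ∃ m, finrank F ↥K = m + 1 := ⟨finrank F ↥K - 1, by omega⟩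
  exact aux_sum_wt F m ↥K hm

/-- the equations of Bender, Coley, Robbins and Rumsey. For any partition
`ν` with `|ν| < n`, `∑_{μ : |μ| ≤ n} (-1)^{μ₁} q^{-μ·ν + C(μ₁,2)} σ(μ,Δ) = 0`. -/
theorem statement10 (n : ℕ) (hn : 0 < n) (q : ℕ) (hq : IsPrimePow q)
    (F : Type) [Field F] [Fintype F] (hF : Fintype.card F = q)
    (Δ : Matrix (Fin n) (Fin n) F) (ν : ℕ →₀ ℕ) (hν : IsPtn ν) (hνlt : ptnSize ν < n) :
    (∑ᶠ μ ∈ {μ : ℕ →₀ ℕ | IsPtn μ ∧ ptnSize μ ≤ n},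
        (-1 : ℚ) ^ (μ 0) * (q : ℚ) ^ (-(dotP μ ν : ℤ) + ((μ 0).choose 2 : ℤ)) *
          (sigmaProf μ Δ : ℚ)) = 0 := by
  subst hF
  classical
  have hqc : (Fintype.card F : ℚ) ≠ 0 := Nat.cast_ne_zero.mpr Fintype.card_ne_zero
  have hν0 : ∀ i, n ≤ i → ν i = 0 := fun i hi => hν.eq_zero (by omega)
  have hSfin := ptnSet_finite n
  rw [← hSfin.coe_toFinset, finsum_mem_coe_finset]
  have hσ : ∀ μ : ℕ →₀ ℕ, (sigmaProf μ Δ : ℚ)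
      = ((Finset.univ.filter (fun W : Submodule F (Fin n → F) => profil Δ W = μ)).card : ℚ) := by
    intro μ
    rw [sigmaProf, Nat.card_congr (Equiv.subtypeEquivRight
      (fun W => (hasProfile_iff Δ μ W).trans eq_comm)),
      Nat.card_eq_fintype_card, Fintype.card_subtype]
  have step1 : ∑ μ ∈ hSfin.toFinset,
      (-1 : ℚ) ^ (μ 0) * (Fintype.card F : ℚ) ^ (-(dotP μ ν : ℤ) + ((μ 0).choose 2 : ℤ)) *
        (sigmaProf μ Δ : ℚ)
      = ∑ W : Submodule F (Fin n → F),
        (-1 : ℚ) ^ (profil Δ W 0) * (Fintype.card F : ℚ)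
          ^ (-(dotP (profil Δ W) ν : ℤ) + (((profil Δ W) 0).choose 2 : ℤ)) := by
    rw [← Finset.sum_fiberwise_of_maps_to (g := fun W => profil Δ W) (t := hSfin.toFinset)
      (fun W _ => hSfin.mem_toFinset.mpr ⟨isPtn_profil Δ W, ptnSize_profil Δ W⟩)
      (fun W => (-1 : ℚ) ^ (profil Δ W 0) * (Fintype.card F : ℚ)
        ^ (-(dotP (profil Δ W) ν : ℤ) + (((profil Δ W) 0).choose 2 : ℤ)))]
    apply Finset.sum_congr rfl
    intro μ _
    rw [hσ μ, Finset.sum_congr rfl (fun W hW => by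
      rw [(Finset.mem_filter.mp hW).2]), Finset.sum_const, nsmul_eq_mul, mul_comm]
  rw [step1]
  have step2 : ∀ W : Submodule F (Fin n → F),
      (-1 : ℚ) ^ (profil Δ W 0) * (Fintype.card F : ℚ)
        ^ (-(dotP (profil Δ W) ν : ℤ) + (((profil Δ W) 0).choose 2 : ℤ))
      = (Fintype.card F : ℚ) ^ (-((n * ν 0 : ℕ) : ℤ)) *
        (wtq F (finrank F ↥W) * ∏ j ∈ Finset.range n, (∑ φ : Module.Dual F (Fin n → F),
          if iterSpan Δ W (j + 1) ≤ LinearMap.ker φ then (1:ℚ) else 0) ^ (ν j - ν (j + 1))) := by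
    intro W
    have hNA : ∀ j ∈ Finset.range n,
        (∑ φ : Module.Dual F (Fin n → F),
          if iterSpan Δ W (j + 1) ≤ LinearMap.ker φ then (1:ℚ) else 0) ^ (ν j - ν (j + 1))
        = ((Fintype.card F : ℚ) ^ ((n : ℤ) - (dseq Δ W (j + 1) : ℤ))) ^ (ν j - ν (j + 1)) := by
      intro j _
      rw [aux_card_ann (iterSpan Δ W (j + 1))]
      rfl
    rw [Finset.prod_congr rfl hNA]
    have hpow : ∀ j ∈ Finset.range n,
        ((Fintype.card F : ℚ) ^ ((n : ℤ) - (dseq Δ W (j + 1) : ℤ))) ^ (ν j - ν (j + 1))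
        = (Fintype.card F : ℚ) ^ (((n : ℤ) - (dseq Δ W (j + 1) : ℤ)) * ((ν j - ν (j+1) : ℕ) : ℤ)) := by
      intro j _
      rw [← zpow_natCast ((Fintype.card F : ℚ) ^ ((n : ℤ) - (dseq Δ W (j + 1) : ℤ))), ← _root_.zpow_mul]
    rw [Finset.prod_congr rfl hpow, aux_zpow_prod hqc]
    have hE : ∑ j ∈ Finset.range n, ((n : ℤ) - (dseq Δ W (j + 1) : ℤ)) * ((ν j - ν (j+1) : ℕ) : ℤ)
        = ((n * ν 0 : ℕ) : ℤ) - (dotP (profil Δ W) ν : ℤ) := by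
      have e1 : ∑ j ∈ Finset.range n, ((n : ℤ) - (dseq Δ W (j + 1) : ℤ)) * ((ν j - ν (j+1) : ℕ) : ℤ)
          = (∑ j ∈ Finset.range n, ((ν j : ℤ) - ν (j + 1))) * n
            - ∑ j ∈ Finset.range n, ((ν j : ℤ) - ν (j + 1)) * (dseq Δ W (j + 1) : ℤ) := by
        rw [Finset.sum_mul, ← Finset.sum_sub_distrib]
        apply Finset.sum_congr rfl
        intro j _
        rw [Nat.cast_sub (hν j)]
        ring
      rw [e1, Finset.sum_range_sub' (fun j => (ν j : ℤ)) n, hν0 n le_rfl,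
        dot_tele Δ W ν hν (hν0 n le_rfl)]
      push_cast
      ring
    rw [hE]
    rw [wtq, profil_zero]
    rw [show (-(dotP (profil Δ W) ν : ℤ) + (((finrank F ↥W)).choose 2 : ℤ))
        = (-((n * ν 0 : ℕ) : ℤ)) + ((((finrank F ↥W)).choose 2 : ℤ)
          + (((n * ν 0 : ℕ) : ℤ) - (dotP (profil Δ W) ν : ℤ))) by ring]
    rw [zpow_add₀ hqc, zpow_add₀ hqc, zpow_natCast]
    ring
  rw [Finset.sum_congr rfl (fun W _ => step2 W), ← Finset.mul_sum,
    master Δ ν hν hνlt, mul_zero]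
end
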